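/- Let P(r,s|a,b) be a nonsignaling box with V(P) nonempty and D(P) = sup over probability distributions ρ(a) of inf over ρ(r,𝐬|a)∈V(P) of the mutual information I(A;𝐒) of the channel ρ(𝐬|a)=Σ_r ρ(r,𝐬|a) with input ρ(a). Suppose λ*(r,s,a,b) and a strictly positive probability distribution ρ*(a) satisfy the dual constraint Σ_a ρ*(a) max_r exp(Σ_b λ*(r,s_b,a,b)) ≤ 1 for all 𝐬∈𝓢^B, together with Σ_{r,s,a,b} P(r,s|a,b)ρ*(a)λ*(r,s,a,b) = D(P). Define the Bell coefficients B(r,s;a,b) = ρ*(a)λ*(r,s,a,b), L = max_{𝐫,𝐬} Σ_{a,b} B(r_a,s_b;a,b), and ΔB = Σ_{r,s,a,b} P(r,s|a,b)B(r,s;a,b) − L. Then sup over strictly positive η(a) of [ (ΔB+L)/γ + K_η ] = D(P), where γ = Σ_a η(a), ρ(a) = η(a)/γ, and K_η = −log max_{𝐬} Σ_a ρ(a) max_r exp( η(a)^{−1} Σ_b B(r,s_b;a,b) ). -/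

import Mathlib

open scoped BigOperators

/-- A probability distribution on a finite type. -/
def IsDist {α : Type*} [Fintype α] (q : α → ℝ) : Prop :=
  (∀ x, 0 ≤ q x) ∧ ∑ x, q x = 1

/-- Mutual information of the channel `W` with input distribution `q`
(convention `0 · log 0 = 0`, automatic since `Real.log 0 = 0`). -/
noncomputable def mutInfo {X Y : Type*} [Fintype X] [Fintype Y]
    (W : Y → X → ℝ) (q : X → ℝ) : ℝ :=
  ∑ y, ∑ x, W y x * q x * Real.log (W y x / ∑ x', W y x' * q x')

/-- A nonsignaling box `P(r,s|a,b)`. -/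
def IsNSBox {R S : Type*} [Fintype R] [Fintype S] {A B : ℕ}
    (P : R → S → Fin A → Fin B → ℝ) : Prop :=
  (∀ r s a b, 0 ≤ P r s a b) ∧
  (∀ a b, ∑ r, ∑ s, P r s a b = 1) ∧
  (∀ a r b b', ∑ s, P r s a b = ∑ s, P r s a b') ∧
  (∀ b s a a', ∑ r, P r s a b = ∑ r, P r s a' b)

/-- Membership in the set `V(P)`: `ρ(r,𝐬|a)` is a conditional probability over
`r` and sequences `𝐬 ∈ 𝓢^B` whose marginal on `(r, s_b)` is `P(r,s|a,b)`. -/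
def MemV {R S : Type*} [Fintype R] [Fintype S] [DecidableEq S] {A B : ℕ}
    (P : R → S → Fin A → Fin B → ℝ)
    (ρ : R → (Fin B → S) → Fin A → ℝ) : Prop :=
  (∀ r ss a, 0 ≤ ρ r ss a) ∧
  (∀ a, ∑ r, ∑ ss : Fin B → S, ρ r ss a = 1) ∧
  (∀ a b r s, ∑ ss : Fin B → S, (if ss b = s then ρ r ss a else 0) = P r s a b)


/-- `D(P) = sup_{ρ(a)} inf_{ρ(r,𝐬|a) ∈ V(P)} I(A;𝐒)`. -/
noncomputable def DP {R S : Type*} [Fintype R] [Fintype S] [DecidableEq S]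
    {A B : ℕ} (P : R → S → Fin A → Fin B → ℝ) : ℝ :=
  sSup { d : ℝ | ∃ q : Fin A → ℝ, IsDist q ∧
    d = sInf { x : ℝ | ∃ ρ, MemV P ρ ∧
          x = mutInfo (fun ss a => ∑ r, ρ r ss a) q } }

/-!
For an input distribution `q` and any `g` with `∑ₐ q(a) exp g(𝐬,a) ≤ 1` for all `𝐬`, the
inequality `log t ≤ t - 1` gives `∑ W(𝐬|a) q(a) g(𝐬,a) ≤ I(A;𝐒)`. Choosing
`exp g(𝐬,a) = maxᵣ exp(η(a)⁻¹ ∑_b B(r,s_b;a,b)) / M_η`, where `K_η = -log M_η`, and using that the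
`(r, s_b)`-marginals of any `ρ ∈ V(P)` are `P`, this reads `(ΔB + L)/γ + K_η ≤ I(A;𝐒)` on all of
`V(P)`, hence `≤ D(P)`. At `η = ρ*` the dual constraint says `M_η ≤ 1`, i.e. `K_η ≥ 0`, and
`(ΔB + L)/γ` is the dual objective, equal to `D(P)`; so the supremum is attained there.
-/
open Real Finset

section MutualInformation

variable {X Y : Type*} [Fintype X] [Fintype Y] {W : Y → X → ℝ} {q : X → ℝ}

lemma sum_sum_mul_eq_one (hW : ∀ x, IsDist (W · x)) (hq : IsDist q) :
    ∑ y, ∑ x, W y x * q x = 1 := by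
  rw [sum_comm]
  simp only [← sum_mul, (hW _).2, one_mul, hq.2]

lemma mul_mul_sub_mul_mul_log_le {w p g D : ℝ} (hw : 0 ≤ w) (hp : 0 ≤ p) (hD : w * p ≤ D) :
    w * p * g - w * p * log (w / D) ≤ p * exp g * D - w * p := by
  rcases (mul_nonneg hw hp).eq_or_lt with h | h
  · have hD0 : 0 ≤ D := h ▸ hD
    rw [← h]
    simpa using by positivity
  · have hw0 : 0 < w := pos_of_mul_pos_left h hp
    have hD0 : 0 < D := h.trans_le hD
    have hlog := log_le_sub_one_of_pos (x := exp g * D / w) (by positivity)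
    rw [log_div (by positivity) hw0.ne', log_mul (exp_ne_zero g) hD0.ne', log_exp] at hlog
    calc w * p * g - w * p * log (w / D) = w * p * (g + log D - log w) := by
          rw [log_div hw0.ne' hD0.ne']; ring
      _ ≤ w * p * (exp g * D / w - 1) := by gcongr
      _ = p * exp g * D - w * p := by field_simp

theorem sum_sum_mul_le_mutInfo (hW : ∀ x, IsDist (W · x)) (hq : IsDist q) (g : Y → X → ℝ)
    (hg : ∀ y, ∑ x, q x * exp (g y x) ≤ 1) :
    ∑ y, ∑ x, W y x * q x * g y x ≤ mutInfo W q := by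
  set D : Y → ℝ := fun y => ∑ x, W y x * q x
  have hWq : ∀ y x, 0 ≤ W y x * q x := fun y x => mul_nonneg ((hW x).1 y) (hq.1 x)
  have hpointwise : ∀ y x, W y x * q x * g y x - W y x * q x * log (W y x / D y)
      ≤ q x * exp (g y x) * D y - W y x * q x := fun y x =>
    mul_mul_sub_mul_mul_log_le ((hW x).1 y) (hq.1 x)
      (single_le_sum (fun x _ => hWq y x) (mem_univ x))
  have hbound : ∑ y, ∑ x, (q x * exp (g y x) * D y - W y x * q x) ≤ 0 := calc
    _ = ∑ y, (∑ x, q x * exp (g y x)) * D y - ∑ y, D y := by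
        simp only [sum_sub_distrib, sum_mul]; rfl
    _ ≤ ∑ y, 1 * D y - ∑ y, D y := by
        gcongr with y
        · exact sum_nonneg fun x _ => hWq y x
        · exact hg y
    _ = 0 := by simp
  have := (sum_le_sum fun y _ => sum_le_sum fun x _ => hpointwise y x).trans hbound
  simp only [sum_sub_distrib] at this
  unfold mutInfo
  linarith

theorem sum_sum_mul_log_sub_log_iSup_le_mutInfo [Nonempty Y] (hW : ∀ x, IsDist (W · x))
    (hq : IsDist q) {E : Y → X → ℝ} (hE : ∀ y x, 0 < E y x) :
    ∑ y, ∑ x, W y x * q x * log (E y x) - log (⨆ y, ∑ x, q x * E y x) ≤ mutInfo W q := by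
  set M := ⨆ y, ∑ x, q x * E y x
  have hF : ∀ y, ∑ x, q x * E y x ≤ M := le_ciSup (Finite.bddAbove_range _)
  obtain ⟨x₀, -, hx₀⟩ := exists_lt_of_sum_lt (f := 0) (g := q) (s := univ)
    (by simp only [Pi.zero_apply, sum_const_zero, hq.2, zero_lt_one])
  have hM : 0 < M := (sum_pos' (fun x _ => mul_nonneg (hq.1 x) (hE _ x).le)
    ⟨x₀, mem_univ _, mul_pos hx₀ (hE _ x₀)⟩).trans_le (hF (Classical.arbitrary Y))
  have hg : ∀ y, ∑ x, q x * exp (log (E y x / M)) ≤ 1 := fun y => by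
    simp only [exp_log (div_pos (hE y _) hM), mul_div, ← sum_div]
    exact div_le_one_of_le₀ (hF y) hM.le
  calc _ = ∑ y, ∑ x, W y x * q x * (log (E y x) - log M) := by
        simp only [mul_sub, sum_sub_distrib]
        simp_rw [← sum_mul]
        rw [sum_sum_mul_eq_one hW hq, one_mul]
    _ = ∑ y, ∑ x, W y x * q x * log (E y x / M) := by
        simp only [log_div (hE _ _).ne' hM.ne']
    _ ≤ mutInfo W q := sum_sum_mul_le_mutInfo hW hq _ hg

theorem mutInfo_nonneg (hW : ∀ x, IsDist (W · x)) (hq : IsDist q) : 0 ≤ mutInfo W q := by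
  simpa using sum_sum_mul_le_mutInfo hW hq 0 (by simp [hq.2])

theorem mutInfo_le_card (hW : ∀ x, IsDist (W · x)) (hq : IsDist q) :
    mutInfo W q ≤ Fintype.card X := by
  have hpointwise : ∀ y x, W y x * q x * log (W y x / ∑ x', W y x' * q x') ≤ W y x := by
    intro y x
    have hWq : ∀ x, 0 ≤ W y x * q x := fun x => mul_nonneg ((hW x).1 y) (hq.1 x)
    have hD := single_le_sum (fun x _ => hWq x) (mem_univ x)
    calc _ ≤ W y x * q x * (W y x / ∑ x', W y x' * q x') := by
          gcongr
          · exact hWq x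
          · exact log_le_self (div_nonneg ((hW x).1 y) (hD.trans' (hWq x)))
      _ = W y x * (W y x * q x / ∑ x', W y x' * q x') := by ring
      _ ≤ W y x * 1 := by
          gcongr
          · exact (hW x).1 y
          · exact div_le_one_of_le₀ hD (hD.trans' (hWq x))
      _ = W y x := mul_one _
  calc mutInfo W q ≤ ∑ y, ∑ x, W y x := sum_le_sum fun y _ => sum_le_sum fun x _ => hpointwise y x
    _ = Fintype.card X := by rw [sum_comm]; simp [(hW _).2]

end MutualInformation

namespace MemV

variable {R S : Type*} [Fintype R] [Fintype S] [DecidableEq S] {A B : ℕ}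
  {P : R → S → Fin A → Fin B → ℝ} {ρ : R → (Fin B → S) → Fin A → ℝ}

lemma isDist_channel (hρ : MemV P ρ) (a : Fin A) : IsDist fun ss => ∑ r, ρ r ss a :=
  ⟨fun ss => sum_nonneg fun r _ => hρ.1 r ss a, by rw [sum_comm, hρ.2.1 a]⟩

lemma sum_mul_apply (hρ : MemV P ρ) (r : R) (a : Fin A) (b : Fin B) (h : S → ℝ) :
    ∑ ss : Fin B → S, ρ r ss a * h (ss b) = ∑ s, P r s a b * h s := by
  simp only [← hρ.2.2 a b r, sum_mul, ite_mul, zero_mul]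
  rw [sum_comm]
  simp

lemma sum_mul_sum_apply (hρ : MemV P ρ) (f : R → S → Fin A → Fin B → ℝ) :
    ∑ ss : Fin B → S, ∑ a, ∑ r, ρ r ss a * ∑ b, f r (ss b) a b
      = ∑ r, ∑ s, ∑ a, ∑ b, P r s a b * f r s a b := by
  calc ∑ ss : Fin B → S, ∑ a, ∑ r, ρ r ss a * ∑ b, f r (ss b) a b
      = ∑ a, ∑ r, ∑ b, ∑ ss : Fin B → S, ρ r ss a * f r (ss b) a b := by
        simp only [mul_sum]
        rw [sum_comm]
        refine sum_congr rfl fun a _ => ?_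
        rw [sum_comm]
        exact sum_congr rfl fun r _ => sum_comm
    _ = ∑ a, ∑ r, ∑ b, ∑ s, P r s a b * f r s a b :=
        sum_congr rfl fun a _ => sum_congr rfl fun r _ => sum_congr rfl fun b _ =>
          hρ.sum_mul_apply r a b (f r · a b)
    _ = ∑ r, ∑ s, ∑ a, ∑ b, P r s a b * f r s a b := by
        rw [sum_comm]
        exact sum_congr rfl fun r _ => (sum_congr rfl fun a _ => sum_comm).trans sum_comm

end MemV

lemma IsDist.nonempty {α : Type*} [Fintype α] {q : α → ℝ} (hq : IsDist q) : Nonempty α :=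
  univ_nonempty_iff.mp (nonempty_of_sum_ne_zero (hq.2 ▸ one_ne_zero))

lemma isDist_div_sum {α : Type*} [Fintype α] [Nonempty α] {η : α → ℝ} (hη : ∀ a, 0 < η a) :
    IsDist fun a => η a / ∑ a', η a' :=
  have hγ : 0 < ∑ a', η a' := sum_pos (fun a _ => hη a) univ_nonempty
  ⟨fun a => div_nonneg (hη a).le hγ.le, by rw [← sum_div, div_self hγ.ne']⟩

lemma le_log_iSup_exp {ι : Type*} [Finite ι] (f : ι → ℝ) (i : ι) :
    f i ≤ log (⨆ j, exp (f j)) :=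
  (log_exp (f i)).symm.le.trans
    (log_le_log (exp_pos _) (le_ciSup (f := fun j => exp (f j)) (Finite.bddAbove_range _) i))

section BellConstant

variable {R S : Type*} {A B : ℕ}

/-- The constant `K_η` of the Bell-violation bound. -/
noncomputable def bellK (Bc : R → S → Fin A → Fin B → ℝ) (η : Fin A → ℝ) : ℝ :=
  -log (⨆ ss : Fin B → S,
    ∑ a, (η a / ∑ a', η a') * ⨆ r, exp ((η a)⁻¹ * ∑ b, Bc r (ss b) a b))

lemma bellK_nonneg {q : Fin A → ℝ} (hq : IsDist q) (hqpos : ∀ a, 0 < q a)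
    (lam : R → S → Fin A → Fin B → ℝ)
    (hfeas : ∀ ss : Fin B → S, ∑ a, q a * ⨆ r, exp (∑ b, lam r (ss b) a b) ≤ 1) :
    0 ≤ bellK (fun r s a b => q a * lam r s a b) q := by
  rw [bellK, neg_nonneg]
  refine log_nonpos (Real.iSup_nonneg fun ss => sum_nonneg fun a _ => mul_nonneg
    (div_nonneg (hq.1 a) (sum_nonneg fun a _ => hq.1 a))
    (Real.iSup_nonneg fun r => (exp_pos _).le)) (Real.iSup_le (fun ss => ?_) zero_le_one)
  simpa only [hq.2, div_one, ← mul_sum, inv_mul_cancel_left₀ (hqpos _).ne'] using hfeas ss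

end BellConstant

section Bell

variable {R S : Type*} [Fintype R] [Fintype S] [DecidableEq S] {A B : ℕ}
  {P : R → S → Fin A → Fin B → ℝ}

theorem le_DP_of_forall_memV {q : Fin A → ℝ} (hq : IsDist q) (hne : ∃ ρ, MemV P ρ) {c : ℝ}
    (hc : ∀ ρ, MemV P ρ → c ≤ mutInfo (fun ss a => ∑ r, ρ r ss a) q) : c ≤ DP P := by
  obtain ⟨ρ₀, hρ₀⟩ := hne
  unfold DP
  refine le_csSup_of_le ⟨A, ?_⟩ ⟨q, hq, rfl⟩
    (le_csInf ⟨_, ρ₀, hρ₀, rfl⟩ ?_)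
  · rintro _ ⟨q', hq', rfl⟩
    have hbdd : BddBelow {x | ∃ ρ, MemV P ρ ∧ x = mutInfo (fun ss a => ∑ r, ρ r ss a) q'} := by
      refine ⟨0, ?_⟩
      rintro _ ⟨ρ, hρ, rfl⟩
      exact mutInfo_nonneg hρ.isDist_channel hq'
    calc _ ≤ mutInfo (fun ss a => ∑ r, ρ₀ r ss a) q' := csInf_le hbdd ⟨ρ₀, hρ₀, rfl⟩
      _ ≤ A := by simpa using mutInfo_le_card hρ₀.isDist_channel hq'
  · rintro _ ⟨ρ, hρ, rfl⟩
    exact hc ρ hρ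

theorem div_sum_add_bellK_le_mutInfo [Nonempty R] [Nonempty S] [Nonempty (Fin A)]
    {ρ : R → (Fin B → S) → Fin A → ℝ} (hρ : MemV P ρ) (Bc : R → S → Fin A → Fin B → ℝ)
    {η : Fin A → ℝ} (hη : ∀ a, 0 < η a) :
    (∑ r, ∑ s, ∑ a, ∑ b, P r s a b * Bc r s a b) / (∑ a, η a) + bellK Bc η
      ≤ mutInfo (fun ss a => ∑ r, ρ r ss a) (fun a => η a / ∑ a', η a') := by
  set γ := ∑ a, η a
  set E : (Fin B → S) → Fin A → ℝ := fun ss a => ⨆ r, exp ((η a)⁻¹ * ∑ b, Bc r (ss b) a b)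
  have hE : ∀ ss a, 0 < E ss a := fun ss a =>
    (exp_pos _).trans_le (le_ciSup (f := fun r => exp ((η a)⁻¹ * ∑ b, Bc r (ss b) a b))
      (Finite.bddAbove_range _) (Classical.arbitrary R))
  have hq := isDist_div_sum hη
  have hpointwise : ∀ ss a, (∑ r, ρ r ss a * ∑ b, Bc r (ss b) a b) / γ
      ≤ (∑ r, ρ r ss a) * (η a / γ) * log (E ss a) := fun ss a => by
    rw [sum_div, sum_mul, sum_mul]
    gcongr with r
    calc (ρ r ss a * ∑ b, Bc r (ss b) a b) / γ
        = ρ r ss a * (η a / γ) * ((η a)⁻¹ * ∑ b, Bc r (ss b) a b) := by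
          field_simp [(hη a).ne']
      _ ≤ ρ r ss a * (η a / γ) * log (E ss a) := by
          gcongr
          · exact mul_nonneg (hρ.1 r ss a) (hq.1 a)
          · exact le_log_iSup_exp (fun r => (η a)⁻¹ * ∑ b, Bc r (ss b) a b) r
  refine le_trans ?_ (sum_sum_mul_log_sub_log_iSup_le_mutInfo hρ.isDist_channel hq hE)
  rw [bellK, ← sub_eq_add_neg, ← hρ.sum_mul_sum_apply, sum_div]
  gcongr with ss _
  rw [sum_div]
  gcongr with a
  exact hpointwise ss a

end Bell

theorem stmt11_general {R S : Type*} [Fintype R] [Fintype S] [DecidableEq S]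
    [Nonempty R] [Nonempty S] {A B : ℕ}
    (P : R → S → Fin A → Fin B → ℝ)
    (hne : ∃ ρ, MemV P ρ)
    (lam : R → S → Fin A → Fin B → ℝ)
    (qstar : Fin A → ℝ) (hq : IsDist qstar) (hqpos : ∀ a, 0 < qstar a)
    (hfeas : ∀ ss : Fin B → S,
      ∑ a, qstar a * ⨆ r, Real.exp (∑ b, lam r (ss b) a b) ≤ 1)
    (hopt : ∑ r, ∑ s, ∑ a, ∑ b, P r s a b * qstar a * lam r s a b = DP P)
    (Bc : R → S → Fin A → Fin B → ℝ)
    (hBc : ∀ r s a b, Bc r s a b = qstar a * lam r s a b)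
    (L ΔB : ℝ)
    (hΔ : ΔB = (∑ r, ∑ s, ∑ a, ∑ b, P r s a b * Bc r s a b) - L) :
    sSup { v : ℝ | ∃ η : Fin A → ℝ, (∀ a, 0 < η a) ∧
        v = (ΔB + L) / (∑ a, η a)
          + (-Real.log (⨆ ss : Fin B → S,
              ∑ a, (η a / ∑ a', η a') *
                ⨆ r, Real.exp ((η a)⁻¹ * ∑ b, Bc r (ss b) a b))) }
      = DP P := by
  have := hq.nonempty
  have hT : ΔB + L = ∑ r, ∑ s, ∑ a, ∑ b, P r s a b * Bc r s a b := by rw [hΔ, sub_add_cancel]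
  have hupper : ∀ η : Fin A → ℝ, (∀ a, 0 < η a) → (ΔB + L) / (∑ a, η a) + bellK Bc η ≤ DP P :=
    fun η hη => le_DP_of_forall_memV (isDist_div_sum hη) hne fun ρ hρ =>
      hT ▸ div_sum_add_bellK_le_mutInfo hρ Bc hη
  have hstar : (ΔB + L) / (∑ a, qstar a) + bellK Bc qstar = DP P := by
    refine le_antisymm (hupper qstar hqpos) ?_
    obtain rfl : Bc = fun r s a b => qstar a * lam r s a b := by
      funext r s a b; exact hBc r s a b
    have hK := bellK_nonneg hq hqpos lam hfeas
    rw [hq.2, div_one, hT, ← hopt]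
    simp only [mul_assoc] at hK ⊢
    linarith
  exact IsGreatest.csSup_eq ⟨⟨qstar, hqpos, hstar.symm⟩, fun _ ⟨η, hη, hv⟩ => hv ▸ hupper η hη⟩

/-- Tightness of the Bell-violation lower bound: if `λ*` and a strictly positive
distribution `ρ*` satisfy the dual constraint and attain `D(P)` in the dual
objective, then for the Bell coefficients `B(r,s;a,b) = ρ*(a) λ*(r,s,a,b)`, with
`L = max_{𝐫,𝐬} Σ_{a,b} B(r_a,s_b;a,b)` and
`ΔB = Σ_{r,s,a,b} P(r,s|a,b) B(r,s;a,b) − L`, one has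
`sup_{η > 0} [(ΔB + L)/γ + K_η] = D(P)`. -/
theorem stmt11 {R S : Type*} [Fintype R] [Fintype S] [DecidableEq S]
    [Nonempty R] [Nonempty S] {A B : ℕ}
    (P : R → S → Fin A → Fin B → ℝ) (hP : IsNSBox P)
    (hne : ∃ ρ, MemV P ρ)
    (lam : R → S → Fin A → Fin B → ℝ)
    (qstar : Fin A → ℝ) (hq : IsDist qstar) (hqpos : ∀ a, 0 < qstar a)
    (hfeas : ∀ ss : Fin B → S,
      ∑ a, qstar a * ⨆ r, Real.exp (∑ b, lam r (ss b) a b) ≤ 1)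
    (hopt : ∑ r, ∑ s, ∑ a, ∑ b, P r s a b * qstar a * lam r s a b = DP P)
    (Bc : R → S → Fin A → Fin B → ℝ)
    (hBc : ∀ r s a b, Bc r s a b = qstar a * lam r s a b)
    (L ΔB : ℝ)
    (hL : L = ⨆ p : (Fin A → R) × (Fin B → S),
        ∑ a, ∑ b, Bc (p.1 a) (p.2 b) a b)
    (hΔ : ΔB = (∑ r, ∑ s, ∑ a, ∑ b, P r s a b * Bc r s a b) - L) :
    sSup { v : ℝ | ∃ η : Fin A → ℝ, (∀ a, 0 < η a) ∧
        v = (ΔB + L) / (∑ a, η a)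
          + (-Real.log (⨆ ss : Fin B → S,
              ∑ a, (η a / ∑ a', η a') *
                ⨆ r, Real.exp ((η a)⁻¹ * ∑ b, Bc r (ss b) a b))) }
      = DP P :=
  stmt11_general P hne lam qstar hq hqpos hfeas hopt Bc hBc L ΔB hΔ
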